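/- arXiv:0911.2022 — 2 statements merged into one kernel-verified Lean document; each statement's English description precedes it below -/
import Mathlib

section
/- (Fourier-Motzkin elimination step in the proof of Theorem 1) Let hS, hSK, hT, hTK and a1, a2, a3, a4, a5, b1, b2, b3, b4, b5 be real numbers satisfying a1 <= a3 <= a4, a2 <= a4, b1 <= b3 <= b4, and b2 <= b4. Then there exist real numbers r1 >= 0 and r2 >= 0 satisfying the ten strict inequalities hSK - r1 < a1; hSK < a2; hSK - r1 + r2 < a3; hSK + r2 < a4; hS + r2 < a5; hTK - r2 < b1; hTK < b2; hTK - r2 + r1 < b3; hTK + r1 < b4; hT + r1 < b5; if and only if the following thirteen inequalities hold: hSK < a2; hTK < b2; hS < a5; hT < b5; hSK + hTK < a1 + b4; hSK + hTK < b1 + a4; hSK + hTK < a3 + b3; hSK + hT < a1 + b5; hS + hTK < a5 + b1; 2·hSK + hTK < a1 + a4 + b3; hSK + 2·hTK < b1 + b4 + a3; hS + hSK + hTK < a1 + a5 + b3; hT + hSK + hTK < b1 + b5 + a3. -/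
/-!
Necessity: each of the thirteen inequalities is a sum of some of the ten (together with
`0 ≤ r1`, `0 ≤ r2`). Sufficiency is Fourier–Motzkin elimination: for fixed `r2` the ten
inequalities bound `r1` strictly from below by `hSK - a1`, `hSK - a3 + r2` and from above by
`b3 - hTK + r2`, `b4 - hTK`, `b5 - hT`, so a feasible `r1 ≥ 0` exists iff every lower bound
(and `0`) lies below every upper bound. Together with the remaining constraints on `r2`, this
bounds `r2` between finitely many affine expressions in the data, and the thirteen
inequalities and the ordering hypotheses make these bounds compatible.
-/

theorem Finset.exists_ge_and_between {α : Type*} [LinearOrder α] [DenselyOrdered α]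
    [NoMaxOrder α] [NoMinOrder α] (a : α) (s t : Finset α)
    (ha : ∀ y ∈ t, a < y) (H : ∀ x ∈ s, ∀ y ∈ t, x < y) :
    ∃ b, a ≤ b ∧ (∀ x ∈ s, x < b) ∧ ∀ y ∈ t, b < y := by
  have : Nonempty α := ⟨a⟩
  obtain ⟨b, hsb, hbt⟩ :=
    (insert a s).exists_between' t (Finset.forall_mem_insert .. |>.mpr ⟨ha, H⟩)
  exact ⟨b, (hsb a (s.mem_insert_self a)).le, fun x hx ↦ hsb x (s.mem_insert_of_mem hx), hbt⟩

theorem fourier_motzkin_step_theorem1_general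
    (hS hSK hT hTK a1 a2 a3 a4 a5 b1 b2 b3 b4 b5 : ℝ)
    (ha13 : a1 ≤ a3) (ha24 : a2 ≤ a4)
    (hb13 : b1 ≤ b3) (hb24 : b2 ≤ b4) :
    (∃ r1 r2 : ℝ, 0 ≤ r1 ∧ 0 ≤ r2 ∧
      hSK - r1 < a1 ∧ hSK < a2 ∧ hSK - r1 + r2 < a3 ∧ hSK + r2 < a4 ∧ hS + r2 < a5 ∧
      hTK - r2 < b1 ∧ hTK < b2 ∧ hTK - r2 + r1 < b3 ∧ hTK + r1 < b4 ∧ hT + r1 < b5) ↔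
    (hSK < a2 ∧ hTK < b2 ∧ hS < a5 ∧ hT < b5 ∧
      hSK + hTK < a1 + b4 ∧ hSK + hTK < b1 + a4 ∧ hSK + hTK < a3 + b3 ∧
      hSK + hT < a1 + b5 ∧ hS + hTK < a5 + b1 ∧
      2 * hSK + hTK < a1 + a4 + b3 ∧ hSK + 2 * hTK < b1 + b4 + a3 ∧
      hS + hSK + hTK < a1 + a5 + b3 ∧ hT + hSK + hTK < b1 + b5 + a3) := by
  constructor
  · rintro ⟨r1, r2, hr1, hr2, h1, h2, h3, h4, h5, h6, h7, h8, h9, h10⟩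
    refine ⟨h2, h7, ?_, ?_, ?_, ?_, ?_, ?_, ?_, ?_, ?_, ?_, ?_⟩ <;> linarith
  · rintro ⟨c1, c2, c3, c4, c5, c6, c7, c8, c9, c10, c11, c12, c13⟩
    obtain ⟨r2, hr2, hr2_lower, hr2_upper⟩ := Finset.exists_ge_and_between 0
      {hTK - b1, hSK + hTK - a1 - b3}
      {a4 - hSK, a5 - hS, a3 + b4 - hSK - hTK, a3 + b5 - hSK - hT}
      (by simp only [Finset.forall_mem_insert, Finset.mem_singleton, forall_eq]
          and_intros <;> linarith)
      (by simp only [Finset.forall_mem_insert, Finset.mem_singleton, forall_eq]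
          and_intros <;> linarith)
    simp only [Finset.forall_mem_insert, Finset.mem_singleton, forall_eq] at hr2_lower hr2_upper
    obtain ⟨r1, hr1, hr1_lower, hr1_upper⟩ := Finset.exists_ge_and_between 0
      {hSK - a1, hSK - a3 + r2} {b3 - hTK + r2, b4 - hTK, b5 - hT}
      (by simp only [Finset.forall_mem_insert, Finset.mem_singleton, forall_eq]
          and_intros <;> linarith)
      (by simp only [Finset.forall_mem_insert, Finset.mem_singleton, forall_eq]
          and_intros <;> linarith)
    simp only [Finset.forall_mem_insert, Finset.mem_singleton, forall_eq] at hr1_lower hr1_upper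
    refine ⟨r1, r2, hr1, hr2, ?_, c1, ?_, ?_, ?_, ?_, c2, ?_, ?_, ?_⟩ <;> linarith

/-- **Fourier-Motzkin elimination step in the proof of Theorem 1.**  Under the ordering
hypotheses `a1 ≤ a3 ≤ a4`, `a2 ≤ a4`, `b1 ≤ b3 ≤ b4`, `b2 ≤ b4`, there exist
nonnegative `r1, r2` satisfying the ten strict inequalities of the coding scheme iff the
thirteen inequalities of Theorem 1 hold. -/
theorem fourier_motzkin_step_theorem1
    (hS hSK hT hTK a1 a2 a3 a4 a5 b1 b2 b3 b4 b5 : ℝ)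
    (ha13 : a1 ≤ a3) (ha34 : a3 ≤ a4) (ha24 : a2 ≤ a4)
    (hb13 : b1 ≤ b3) (hb34 : b3 ≤ b4) (hb24 : b2 ≤ b4) :
    (∃ r1 r2 : ℝ, 0 ≤ r1 ∧ 0 ≤ r2 ∧
      hSK - r1 < a1 ∧ hSK < a2 ∧ hSK - r1 + r2 < a3 ∧ hSK + r2 < a4 ∧ hS + r2 < a5 ∧
      hTK - r2 < b1 ∧ hTK < b2 ∧ hTK - r2 + r1 < b3 ∧ hTK + r1 < b4 ∧ hT + r1 < b5) ↔
    (hSK < a2 ∧ hTK < b2 ∧ hS < a5 ∧ hT < b5 ∧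
      hSK + hTK < a1 + b4 ∧ hSK + hTK < b1 + a4 ∧ hSK + hTK < a3 + b3 ∧
      hSK + hT < a1 + b5 ∧ hS + hTK < a5 + b1 ∧
      2 * hSK + hTK < a1 + a4 + b3 ∧ hSK + 2 * hTK < b1 + b4 + a3 ∧
      hS + hSK + hTK < a1 + a5 + b3 ∧ hT + hSK + hTK < b1 + b5 + a3) :=
  fourier_motzkin_step_theorem1_general hS hSK hT hTK a1 a2 a3 a4 a5 b1 b2 b3 b4 b5 ha13 ha24 hb13
    hb24
end

section
/- (Separation gap) Let (S,T) be the triangular source: {0,1}-valued random variables with Pr(S=0,T=0) = Pr(S=1,T=0) = Pr(S=1,T=1) = 1/3 and Pr(S=0,T=1) = 0. Then for every pair of independent {0,1}-valued random variables X1, X2, one has H(X1 + X2) <= 3/2 < log2(3) = H(S,T). In particular there is no product input distribution p(x1)p(x2) for the deterministic interference channel Y1 = X1, Y2 = X1 + X2 under which H(Y2) >= H(S,T), so the Slepian-Wolf rate region of the source and the capacity region of the channel do not intersect. -/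
/-- Shannon entropy (in bits) of the push-forward of the pmf `p` under the map `f`. -/
noncomputable def margEnt {Ω α : Type*} [Fintype Ω] [Fintype α] [DecidableEq α]
    (p : Ω → ℝ) (f : Ω → α) : ℝ :=
  ∑ a : α, -((∑ ω : Ω, if f ω = a then p ω else 0) *
      Real.logb 2 (∑ ω : Ω, if f ω = a then p ω else 0))

open Fin.NatCast

/-!
Write `a = P(X₁ = 1)`, `b = P(X₂ = 1)` and `s = (a + b)/2`. Gibbs' inequality against the
binomial law `Bin(2, s)` bounds the entropy (in nats) of `Y = X₁ + X₂` by
`2 h(s) - P(Y = 1) log 2`, and `P(Y = 1) = 2 s (1 - s) + (a - b)²/2 ≥ 2 s (1 - s)`.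
The function `2 h(s) - 2 s (1 - s) log 2` is symmetric about `1/2` and increasing on `[0, 1/2]`
(its derivative there is at least `4x - 2x log 2 ≥ 0` with `x = 1 - 2s`, by the series of
`log (1 + x) - log (1 - x)`), so it is at most its value `3/2 log 2` at `s = 1/2`.
The source takes three values with probability `1/3` each, so `H(S,T) = log₂ 3`,
and `log₂ 3 > 3/2` because `2³ < 3²`.
-/

open Real

lemma negMulLog_le_neg_mul_log_add_sub {p q : ℝ} (hp : 0 ≤ p) (hq : 0 < q) :
    negMulLog p ≤ -(p * log q) + (q - p) := by
  rcases hp.eq_or_lt with rfl | hp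
  · simpa using hq.le
  have h := mul_le_mul_of_nonneg_left (log_le_sub_one_of_pos (div_pos hq hp)) hp.le
  rw [log_div hq.ne' hp.ne', mul_sub, mul_sub, mul_div_cancel₀ _ hp.ne'] at h
  rw [negMulLog]
  linarith

lemma two_mul_le_log_one_add_sub_log_one_sub {x : ℝ} (h0 : 0 ≤ x) (h1 : x < 1) :
    2 * x ≤ log (1 + x) - log (1 - x) := by
  have hs := hasSum_log_sub_log_of_abs_lt_one (abs_lt.2 ⟨by linarith, h1⟩)
  simpa using le_hasSum hs 0 fun k _ => by positivity

lemma monotoneOn_two_mul_binEntropy_sub :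
    MonotoneOn (fun s => 2 * binEntropy s - 2 * s * (1 - s) * log 2) (Set.Icc 0 2⁻¹) := by
  have hlog2 : log 2 ≤ 2 := by linarith [log_le_sub_one_of_pos (zero_lt_two' ℝ)]
  apply monotoneOn_of_hasDerivWithinAt_nonneg (convex_Icc 0 2⁻¹)
    (f' := fun s => 2 * (log (1 - s) - log s) - 2 * (1 - 2 * s) * log 2)
  · exact (binEntropy_continuous.const_mul 2 |>.sub (by fun_prop)).continuousOn
  · intro s hs
    rw [interior_Icc] at hs
    have hb := hasDerivAt_binEntropy hs.1.ne' (by linarith [hs.2, two_inv_lt_one (α := ℝ)])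
    have hq : HasDerivAt (fun s : ℝ => 2 * s * (1 - s) * log 2) (2 * (1 - 2 * s) * log 2) s :=
      ((((hasDerivAt_id' s).const_mul 2).mul ((hasDerivAt_id' s).const_sub 1)).mul_const
        (log 2)).congr_deriv (by ring)
    exact ((hb.const_mul 2).sub hq).hasDerivWithinAt
  · intro s hs
    rw [interior_Icc] at hs
    have h := two_mul_le_log_one_add_sub_log_one_sub (x := 1 - 2 * s) (by linarith [hs.2])
      (by linarith [hs.1])
    rw [show 1 + (1 - 2 * s) = 2 * (1 - s) by ring, show 1 - (1 - 2 * s) = 2 * s by ring,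
      log_mul two_ne_zero (by linarith [hs.2, two_inv_lt_one (α := ℝ)]),
      log_mul two_ne_zero hs.1.ne'] at h
    nlinarith [hs.2]

lemma two_mul_binEntropy_sub_le {s : ℝ} (h0 : 0 ≤ s) (h1 : s ≤ 1) :
    2 * binEntropy s - 2 * s * (1 - s) * log 2 ≤ 3 / 2 * log 2 := by
  wlog hs : s ≤ 2⁻¹ generalizing s
  · have h := this (s := 1 - s) (by linarith) (by linarith) (by linarith)
    rw [binEntropy_one_sub] at h
    linarith
  have h := monotoneOn_two_mul_binEntropy_sub ⟨h0, hs⟩ ⟨by norm_num, le_rfl⟩ hs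
  simp only [binEntropy_two_inv] at h
  linarith

lemma negMulLog_bernoulliSum_le {a b : ℝ} (ha0 : 0 ≤ a) (ha1 : a ≤ 1) (hb0 : 0 ≤ b)
    (hb1 : b ≤ 1) (hab0 : 0 < a + b) (hab1 : a + b < 2) :
    negMulLog ((1 - a) * (1 - b)) + negMulLog (a * (1 - b) + (1 - a) * b) + negMulLog (a * b) ≤
      2 * binEntropy ((a + b) / 2) - 2 * ((a + b) / 2) * (1 - (a + b) / 2) * log 2 := by
  generalize hs_def : (a + b) / 2 = s
  have hs0 : 0 < s := by linarith
  have hs1 : 0 < 1 - s := by linarith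
  have ha1' : 0 ≤ 1 - a := by linarith
  have hb1' : 0 ≤ 1 - b := by linarith
  have g0 := negMulLog_le_neg_mul_log_add_sub (mul_nonneg ha1' hb1') (pow_pos hs1 2)
  have g1 := negMulLog_le_neg_mul_log_add_sub
    (add_nonneg (mul_nonneg ha0 hb1') (mul_nonneg ha1' hb0)) (mul_pos (mul_pos two_pos hs0) hs1)
  have g2 := negMulLog_le_neg_mul_log_add_sub (mul_nonneg ha0 hb0) (pow_pos hs0 2)
  rw [log_pow] at g0 g2
  rw [log_mul (mul_pos two_pos hs0).ne' hs1.ne', log_mul two_ne_zero hs0.ne'] at g1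
  have hmid : 2 * s * (1 - s) * log 2 ≤ (a * (1 - b) + (1 - a) * b) * log 2 :=
    mul_le_mul_of_nonneg_right (by nlinarith [sq_nonneg (a - b)]) (log_nonneg one_le_two)
  rw [binEntropy_eq_negMulLog_add_negMulLog_one_sub]
  simp only [negMulLog] at g0 g1 g2 ⊢
  subst hs_def
  linear_combination g0 + g1 + g2 + hmid

lemma negMulLog_bernoulliSum_le_three_halves {a b : ℝ} (ha0 : 0 ≤ a) (ha1 : a ≤ 1)
    (hb0 : 0 ≤ b) (hb1 : b ≤ 1) :
    negMulLog ((1 - a) * (1 - b)) + negMulLog (a * (1 - b) + (1 - a) * b) + negMulLog (a * b) ≤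
      3 / 2 * log 2 := by
  have hlog2 : 0 ≤ log 2 := log_nonneg one_le_two
  rcases (add_nonneg ha0 hb0).eq_or_lt with hab0 | hab0
  · obtain ⟨rfl, rfl⟩ : a = 0 ∧ b = 0 := ⟨by linarith, by linarith⟩
    simpa using hlog2
  rcases (add_le_add ha1 hb1).lt_or_eq with hab1 | hab1
  · exact (negMulLog_bernoulliSum_le ha0 ha1 hb0 hb1 hab0 (by linarith)).trans
      (two_mul_binEntropy_sub_le (by positivity) (by linarith))
  · obtain ⟨rfl, rfl⟩ : a = 1 ∧ b = 1 := ⟨by linarith, by linarith⟩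
    simpa using hlog2

lemma margEnt_eq_sum_negMulLog {Ω α : Type*} [Fintype Ω] [Fintype α] [DecidableEq α]
    (p : Ω → ℝ) (f : Ω → α) :
    margEnt p f = (∑ a, negMulLog (∑ ω, if f ω = a then p ω else 0)) / log 2 := by
  simp only [margEnt, negMulLog, logb, Finset.sum_div]
  congr 1 with a
  ring

lemma sum_ite_comp_eq_sum_ite {Ω α β : Type*} [Fintype Ω] [Fintype α] [DecidableEq α]
    [DecidableEq β] (p : Ω → ℝ) (h : Ω → α) (g : α → β) (y : β) :
    (∑ ω, if g (h ω) = y then p ω else 0) =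
      ∑ x, if g x = y then (∑ ω, if h ω = x then p ω else 0) else 0 := by
  calc (∑ ω, if g (h ω) = y then p ω else 0)
      = ∑ ω, ∑ x, if h ω = x then (if g x = y then p ω else 0) else 0 := by
        simp [Finset.sum_ite_eq]
    _ = ∑ x, ∑ ω, if h ω = x then (if g x = y then p ω else 0) else 0 := Finset.sum_comm
    _ = _ := by
        congr 1 with x
        split_ifs <;> simp

lemma sum_ite_eq_false_eq_one_sub {Ω : Type*} [Fintype Ω] (p : Ω → ℝ)
    (hp : ∑ ω, p ω = 1) (X : Ω → Bool) :
    (∑ ω, if X ω = false then p ω else 0) = 1 - ∑ ω, if X ω = true then p ω else 0 := by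
  rw [← hp, ← Finset.sum_sub_distrib]
  congr 1 with ω
  cases X ω <;> simp

lemma sum_ite_mem_Icc {Ω : Type*} [Fintype Ω] {p : Ω → ℝ} (hp0 : ∀ ω, 0 ≤ p ω)
    (hp : ∑ ω, p ω = 1) (P : Ω → Prop) [DecidablePred P] :
    (∑ ω, if P ω then p ω else 0) ∈ Set.Icc 0 1 :=
  ⟨Finset.sum_nonneg fun ω _ => by split_ifs <;> simp [hp0],
    hp ▸ Finset.sum_le_sum fun ω _ => by split_ifs <;> simp [hp0]⟩

lemma margEnt_bool_add_le_three_halves {Ω : Type*} [Fintype Ω] {p : Ω → ℝ}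
    (hp0 : ∀ ω, 0 ≤ p ω) (hp : ∑ ω, p ω = 1) {X1 X2 : Ω → Bool}
    (hindep : ∀ b1 b2 : Bool,
      (∑ ω, if X1 ω = b1 ∧ X2 ω = b2 then p ω else 0) =
        (∑ ω, if X1 ω = b1 then p ω else 0) * (∑ ω, if X2 ω = b2 then p ω else 0)) :
    margEnt p (fun ω => (((X1 ω).toNat + (X2 ω).toNat : ℕ) : Fin 3)) ≤ 3 / 2 := by
  have hjoint : ∀ x : Bool × Bool, (∑ ω, if (X1 ω, X2 ω) = x then p ω else 0) =
      (∑ ω, if X1 ω = x.1 then p ω else 0) * (∑ ω, if X2 ω = x.2 then p ω else 0) :=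
    fun ⟨b1, b2⟩ => by simpa only [Prod.mk.injEq] using hindep b1 b2
  obtain ⟨ha0, ha1⟩ := sum_ite_mem_Icc hp0 hp (fun ω => X1 ω = true)
  obtain ⟨hb0, hb1⟩ := sum_ite_mem_Icc hp0 hp (fun ω => X2 ω = true)
  rw [margEnt_eq_sum_negMulLog, div_le_iff₀ (log_pos one_lt_two)]
  simp +decide only [sum_ite_comp_eq_sum_ite p (fun ω => (X1 ω, X2 ω))
      (fun x => ((x.1.toNat + x.2.toNat : ℕ) : Fin 3)), hjoint,
    sum_ite_eq_false_eq_one_sub p hp, Fin.sum_univ_three, Fintype.sum_prod_type,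
    Fintype.sum_bool, Bool.toNat_true, Bool.toNat_false, Nat.reduceAdd, Nat.cast_one,
    Nat.cast_zero, ite_false, ite_true, zero_add, add_zero]
  exact negMulLog_bernoulliSum_le_three_halves ha0 ha1 hb0 hb1

lemma sum_ite_and_prod_mul_eq {α β : Type*} [Fintype α] [Fintype β] [DecidableEq α]
    [DecidableEq β] (q1 : α → ℝ) (q2 : β → ℝ) (h1 : ∑ a, q1 a = 1) (h2 : ∑ b, q2 b = 1)
    (a : α) (b : β) :
    (∑ x : α × β, if x.1 = a ∧ x.2 = b then q1 x.1 * q2 x.2 else 0) =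
      (∑ x : α × β, if x.1 = a then q1 x.1 * q2 x.2 else 0) *
        (∑ x : α × β, if x.2 = b then q1 x.1 * q2 x.2 else 0) := by
  simp [Fintype.sum_prod_type, ite_and, ← Finset.sum_mul, ← Finset.mul_sum, h1, h2]

lemma three_halves_lt_logb_two_three : (3 / 2 : ℝ) < logb 2 3 := by
  have h : log (2 ^ 3) < log (3 ^ 2) := log_lt_log (by norm_num) (by norm_num)
  rw [log_pow, log_pow] at h
  rw [logb, lt_div_iff₀ (log_pos one_lt_two)]
  push_cast at h
  linarith

lemma margEnt_eq_logb_two_three {Ω : Type*} [Fintype Ω] {p : Ω → ℝ} {S T : Ω → Bool}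
    (h00 : (∑ ω, if S ω = false ∧ T ω = false then p ω else 0) = 1 / 3)
    (h01 : (∑ ω, if S ω = false ∧ T ω = true then p ω else 0) = 0)
    (h10 : (∑ ω, if S ω = true ∧ T ω = false then p ω else 0) = 1 / 3)
    (h11 : (∑ ω, if S ω = true ∧ T ω = true then p ω else 0) = 1 / 3) :
    margEnt p (fun ω => (S ω, T ω)) = logb 2 3 := by
  have hthird : negMulLog (1 / 3) = log 3 / 3 := by
    rw [negMulLog, one_div, log_inv]
    ring
  simp only [margEnt_eq_sum_negMulLog, Fintype.sum_prod_type, Fintype.sum_bool, Prod.mk.injEq,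
    h00, h01, h10, h11, hthird, negMulLog_zero]
  rw [logb]
  ring

theorem separation_gap_triangular_source_general
    {Ω : Type*} [Fintype Ω] (p : Ω → ℝ)
    (S T : Ω → Bool)
    (h00 : (∑ ω : Ω, if S ω = false ∧ T ω = false then p ω else 0) = 1 / 3)
    (h01 : (∑ ω : Ω, if S ω = false ∧ T ω = true then p ω else 0) = 0)
    (h10 : (∑ ω : Ω, if S ω = true ∧ T ω = false then p ω else 0) = 1 / 3)
    (h11 : (∑ ω : Ω, if S ω = true ∧ T ω = true then p ω else 0) = 1 / 3)
    {Ω' : Type*} [Fintype Ω'] (p' : Ω' → ℝ) (hp'nn : ∀ ω, 0 ≤ p' ω)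
    (hp'sum : ∑ ω : Ω', p' ω = 1) (X1 X2 : Ω' → Bool)
    (hindep : ∀ b1 b2 : Bool,
      (∑ ω : Ω', if X1 ω = b1 ∧ X2 ω = b2 then p' ω else 0) =
        (∑ ω : Ω', if X1 ω = b1 then p' ω else 0) *
          (∑ ω : Ω', if X2 ω = b2 then p' ω else 0)) :
    margEnt p' (fun ω => (((X1 ω).toNat + (X2 ω).toNat : ℕ) : Fin 3)) ≤ 3 / 2 ∧
    (3 / 2 : ℝ) < Real.logb 2 3 ∧
    Real.logb 2 3 = margEnt p (fun ω => (S ω, T ω)) ∧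
    ¬ ∃ q1 q2 : Bool → ℝ,
      (∀ b, 0 ≤ q1 b) ∧ (∑ b : Bool, q1 b) = 1 ∧ (∀ b, 0 ≤ q2 b) ∧ (∑ b : Bool, q2 b) = 1 ∧
      margEnt p (fun ω => (S ω, T ω)) ≤
        margEnt (fun bp : Bool × Bool => q1 bp.1 * q2 bp.2)
          (fun bp => ((bp.1.toNat + bp.2.toNat : ℕ) : Fin 3)) := by
  have hsource := margEnt_eq_logb_two_three h00 h01 h10 h11
  refine ⟨margEnt_bool_add_le_three_halves hp'nn hp'sum hindep,
    three_halves_lt_logb_two_three, hsource.symm, ?_⟩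
  rintro ⟨q1, q2, hq1nn, hq1s, hq2nn, hq2s, hle⟩
  have hprod := margEnt_bool_add_le_three_halves (X1 := Prod.fst) (X2 := Prod.snd)
    (fun x : Bool × Bool => mul_nonneg (hq1nn x.1) (hq2nn x.2))
    (by rw [Fintype.sum_prod_type, ← Fintype.sum_mul_sum, hq1s, hq2s, one_mul])
    (sum_ite_and_prod_mul_eq q1 q2 hq1s hq2s)
  linarith [three_halves_lt_logb_two_three]

/-- **Separation gap.**  For the triangular source `(S,T)` and any pair of independent
boolean inputs `X1, X2`, one has `H(X1+X2) ≤ 3/2 < log₂ 3 = H(S,T)`; in particular no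
product input distribution `q1 × q2` achieves `H(X1+X2) ≥ H(S,T)`, so the Slepian-Wolf
region of the source and the capacity region of the deterministic interference channel
`Y1 = X1`, `Y2 = X1 + X2` do not intersect. -/
theorem separation_gap_triangular_source
    {Ω : Type*} [Fintype Ω] (p : Ω → ℝ) (hpnn : ∀ ω, 0 ≤ p ω) (hpsum : ∑ ω : Ω, p ω = 1)
    (S T : Ω → Bool)
    (h00 : (∑ ω : Ω, if S ω = false ∧ T ω = false then p ω else 0) = 1 / 3)
    (h01 : (∑ ω : Ω, if S ω = false ∧ T ω = true then p ω else 0) = 0)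
    (h10 : (∑ ω : Ω, if S ω = true ∧ T ω = false then p ω else 0) = 1 / 3)
    (h11 : (∑ ω : Ω, if S ω = true ∧ T ω = true then p ω else 0) = 1 / 3)
    {Ω' : Type*} [Fintype Ω'] (p' : Ω' → ℝ) (hp'nn : ∀ ω, 0 ≤ p' ω)
    (hp'sum : ∑ ω : Ω', p' ω = 1) (X1 X2 : Ω' → Bool)
    (hindep : ∀ b1 b2 : Bool,
      (∑ ω : Ω', if X1 ω = b1 ∧ X2 ω = b2 then p' ω else 0) =
        (∑ ω : Ω', if X1 ω = b1 then p' ω else 0) *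
          (∑ ω : Ω', if X2 ω = b2 then p' ω else 0)) :
    margEnt p' (fun ω => (((X1 ω).toNat + (X2 ω).toNat : ℕ) : Fin 3)) ≤ 3 / 2 ∧
    (3 / 2 : ℝ) < Real.logb 2 3 ∧
    Real.logb 2 3 = margEnt p (fun ω => (S ω, T ω)) ∧
    ¬ ∃ q1 q2 : Bool → ℝ,
      (∀ b, 0 ≤ q1 b) ∧ (∑ b : Bool, q1 b) = 1 ∧ (∀ b, 0 ≤ q2 b) ∧ (∑ b : Bool, q2 b) = 1 ∧
      margEnt p (fun ω => (S ω, T ω)) ≤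
        margEnt (fun bp : Bool × Bool => q1 bp.1 * q2 bp.2)
          (fun bp => ((bp.1.toNat + bp.2.toNat : ℕ) : Fin 3)) :=
  separation_gap_triangular_source_general p S T h00 h01 h10 h11 p' hp'nn hp'sum X1 X2 hindep
end
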